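/- arXiv:2402.04521 — 2 statements merged into one kernel-verified Lean document; each statement's English description precedes it below -/
import Mathlib

section
/- Let n ≥ 2 be an integer. For C ∈ (0, π/2) define Y_C := 2·∫_C^{π/2} ((sin z / sin C)^{2(n−1)} − 1)^{−1/2} dz. Then limsup_{C → (π/2)⁻} Y_C ≥ 2·√(2/(n−1)). -/
/-!
On `[C, π / 2]` the base `(sin z / sin C) ^ k - 1`, `k = 2 (n - 1)`, of the integrand lies between
two linear functions of `z - C`, both proportional to `π / 2 - C`: the product formula
`sin z - sin C = 2 sin ((π - z - C) / 2) sin ((z - C) / 2)` together with Jordan's inequality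
bounds `sin z - sin C` by multiples of `(π / 2 - C) (z - C)`. Since
`∫_C^{π/2} (c (z - C))^{-1/2} dz = 2 √((π / 2 - C) / c)`, the factor `π / 2 - C` cancels, so that
`Y_C ≤ 4 √(π² / 2)` and `Y_C ≥ 2 √(2 sin^k C / (n - 1)) → 2 √(2 / (n - 1))`.
The upper bound is needed too: `limsup` of a function unbounded above is a junk value.
-/

open Real Set Filter Topology MeasureTheory

lemma intervalIntegrable_sub_rpow_neg_half (a b : ℝ) :
    IntervalIntegrable (fun z ↦ (z - a) ^ (-(1 : ℝ) / 2)) volume a b := by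
  simpa using (intervalIntegral.intervalIntegrable_rpow' (a := 0) (b := b - a)
    (r := -(1 : ℝ) / 2) (by norm_num)).comp_sub_right a

lemma integral_sub_rpow_neg_half (a b : ℝ) :
    ∫ z in a..b, (z - a) ^ (-(1 : ℝ) / 2) = 2 * √(b - a) := by
  rw [intervalIntegral.integral_comp_sub_right (fun x ↦ x ^ (-(1 : ℝ) / 2)), sub_self,
    integral_rpow (Or.inl (by norm_num)), zero_rpow (by norm_num), sqrt_eq_rpow]
  norm_num
  ring

lemma integral_const_mul_sub_rpow_neg_half (a b : ℝ) {c : ℝ} (hc : 0 < c) :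
    ∫ z in a..b, c ^ (-(1 : ℝ) / 2) * (z - a) ^ (-(1 : ℝ) / 2) = 2 * √((b - a) / c) := by
  rw [intervalIntegral.integral_const_mul, integral_sub_rpow_neg_half,
    sqrt_div' _ hc.le, show -(1 : ℝ) / 2 = -(1 / 2) by norm_num, rpow_neg hc.le, ← sqrt_eq_rpow]
  ring

lemma intervalIntegrable_rpow_neg_half_of_mul_sub_le {f : ℝ → ℝ} {a b c : ℝ} (hab : a ≤ b)
    (hc : 0 < c) (hf : Measurable f) (h : ∀ z ∈ Ioc a b, c * (z - a) ≤ f z) :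
    IntervalIntegrable (fun z ↦ f z ^ (-(1 : ℝ) / 2)) volume a b := by
  refine ((intervalIntegrable_sub_rpow_neg_half a b).const_mul (c ^ (-(1 : ℝ) / 2))).mono_fun'
    (hf.pow_const _).aestronglyMeasurable ?_
  rw [uIoc_of_le hab]
  filter_upwards [ae_restrict_mem measurableSet_Ioc] with z hz
  have hcz : 0 < c * (z - a) := mul_pos hc (sub_pos.2 hz.1)
  rw [norm_of_nonneg (rpow_nonneg (hcz.le.trans (h z hz)) _), ← mul_rpow hc.le (sub_pos.2 hz.1).le]
  exact rpow_le_rpow_of_nonpos hcz (h z hz) (by norm_num)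

lemma integral_rpow_neg_half_le_of_mul_sub_le {f : ℝ → ℝ} {a b c : ℝ} (hab : a ≤ b)
    (hc : 0 < c) (hf : Measurable f) (h : ∀ z ∈ Ioc a b, c * (z - a) ≤ f z) :
    ∫ z in a..b, f z ^ (-(1 : ℝ) / 2) ≤ 2 * √((b - a) / c) := by
  rw [← integral_const_mul_sub_rpow_neg_half a b hc]
  refine intervalIntegral.integral_mono_on_of_le_Ioo hab
    (intervalIntegrable_rpow_neg_half_of_mul_sub_le hab hc hf h)
    ((intervalIntegrable_sub_rpow_neg_half a b).const_mul _) fun z hz ↦ ?_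
  have hza : 0 < z - a := sub_pos.2 hz.1
  rw [← mul_rpow hc.le hza.le]
  exact rpow_le_rpow_of_nonpos (mul_pos hc hza) (h z (Ioo_subset_Ioc_self hz)) (by norm_num)

lemma le_integral_rpow_neg_half_of_le_mul_sub {f : ℝ → ℝ} {a b c : ℝ} (hab : a ≤ b)
    (hc : 0 < c) (hf : IntervalIntegrable (fun z ↦ f z ^ (-(1 : ℝ) / 2)) volume a b)
    (hpos : ∀ z ∈ Ioo a b, 0 < f z) (h : ∀ z ∈ Ioo a b, f z ≤ c * (z - a)) :
    2 * √((b - a) / c) ≤ ∫ z in a..b, f z ^ (-(1 : ℝ) / 2) := by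
  rw [← integral_const_mul_sub_rpow_neg_half a b hc]
  refine intervalIntegral.integral_mono_on_of_le_Ioo hab
    ((intervalIntegrable_sub_rpow_neg_half a b).const_mul _) hf fun z hz ↦ ?_
  rw [← mul_rpow hc.le (sub_pos.2 hz.1).le]
  exact rpow_le_rpow_of_nonpos (hpos z hz) (h z hz) (by norm_num)

lemma sin_sub_sin_eq_mul_sin (C z : ℝ) :
    sin z - sin C = 2 * sin ((π - z - C) / 2) * sin ((z - C) / 2) := by
  rw [sin_sub_sin, ← sin_pi_div_two_sub]
  ring_nf

lemma sin_sub_sin_le_mul_sub {C z : ℝ} (hC : 0 ≤ C) (hCz : C ≤ z) (hz : z ≤ π / 2) :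
    sin z - sin C ≤ (π / 2 - C) * (z - C) := by
  rw [sin_sub_sin_eq_mul_sin]
  calc 2 * sin ((π - z - C) / 2) * sin ((z - C) / 2) ≤ 2 * (π / 2 - C) * ((z - C) / 2) := by
        gcongr
        · exact sin_nonneg_of_nonneg_of_le_pi (by linarith) (by linarith)
        · linarith
        · exact (sin_le (by linarith)).trans (by linarith)
        · exact sin_le (by linarith)
    _ = (π / 2 - C) * (z - C) := by ring

lemma mul_sub_le_sin_sub_sin {C z : ℝ} (hC : 0 ≤ C) (hCz : C ≤ z) (hz : z ≤ π / 2) :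
    2 * (π / 2 - C) / π ^ 2 * (z - C) ≤ sin z - sin C := by
  have hπ := pi_pos
  have ha : (π / 2 - C) / π ≤ sin ((π - z - C) / 2) :=
    calc (π / 2 - C) / π ≤ 2 / π * ((π - z - C) / 2) := by
          rw [show 2 / π * ((π - z - C) / 2) = (π - z - C) / π by ring]
          gcongr
          linarith
      _ ≤ _ := mul_le_sin (by linarith) (by linarith)
  have hb : (z - C) / π ≤ sin ((z - C) / 2) :=
    calc (z - C) / π = 2 / π * ((z - C) / 2) := by ring
      _ ≤ _ := mul_le_sin (by linarith) (by linarith)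
  rw [sin_sub_sin_eq_mul_sin]
  calc 2 * (π / 2 - C) / π ^ 2 * (z - C) = 2 * ((π / 2 - C) / π) * ((z - C) / π) := by ring
    _ ≤ 2 * sin ((π - z - C) / 2) * sin ((z - C) / 2) := by
        gcongr
        exact mul_nonneg two_pos.le (sin_nonneg_of_nonneg_of_le_pi (by linarith) (by linarith))

lemma mul_sub_le_sin_div_sin_pow_sub_one {k : ℕ} (hk : k ≠ 0) {C z : ℝ} (hC : 0 < C)
    (hCz : C ≤ z) (hz : z ≤ π / 2) :
    2 * (π / 2 - C) / π ^ 2 * (z - C) ≤ (sin z / sin C) ^ k - 1 := by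
  have hs : 0 < sin C := sin_pos_of_pos_of_lt_pi hC (by linarith [pi_pos])
  have hCz' : sin C ≤ sin z := sin_le_sin_of_le_of_le_pi_div_two (by linarith) hz hCz
  calc 2 * (π / 2 - C) / π ^ 2 * (z - C)
      ≤ sin z - sin C := mul_sub_le_sin_sub_sin hC.le hCz hz
    _ ≤ (sin z - sin C) / sin C := le_div_self (sub_nonneg.2 hCz') hs (sin_le_one C)
    _ = sin z / sin C - 1 := by field_simp
    _ ≤ (sin z / sin C) ^ k - 1 := by
      gcongr
      exact le_self_pow₀ ((one_le_div hs).2 hCz') hk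

lemma sin_div_sin_pow_sub_one_le_mul_sub (k : ℕ) {C z : ℝ} (hC : 0 < C) (hCz : C ≤ z)
    (hz : z ≤ π / 2) :
    (sin z / sin C) ^ k - 1 ≤ k * (π / 2 - C) / sin C ^ k * (z - C) := by
  have hs : 0 < sin C := sin_pos_of_pos_of_lt_pi hC (by linarith [pi_pos])
  have hCz' : sin C ≤ sin z := sin_le_sin_of_le_of_le_pi_div_two (by linarith) hz hCz
  -- `sin` maps `[C, π / 2]` into `[0, 1]`, where `t ↦ t ^ k` is `k`-Lipschitz.
  have hpow : sin z ^ k - sin C ^ k ≤ k * (sin z - sin C) := by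
    have h := abs_pow_sub_pow_le (sin z) (sin C) k
    rw [abs_of_nonneg (sub_nonneg.2 (pow_le_pow_left₀ hs.le hCz' k)),
      abs_of_nonneg (sub_nonneg.2 hCz')] at h
    have hmax : max |sin z| |sin C| ^ (k - 1) ≤ 1 :=
      pow_le_one₀ (by positivity) (max_le (abs_sin_le_one z) (abs_sin_le_one C))
    nlinarith [mul_le_mul_of_nonneg_left hmax
      (mul_nonneg (sub_nonneg.2 hCz') (Nat.cast_nonneg k : (0 : ℝ) ≤ k))]
  calc (sin z / sin C) ^ k - 1
      = (sin z ^ k - sin C ^ k) / sin C ^ k := by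
        rw [div_pow, sub_div, div_self (pow_pos hs k).ne']
    _ ≤ k * ((π / 2 - C) * (z - C)) / sin C ^ k := by
      gcongr
      exact hpow.trans (by gcongr; exact sin_sub_sin_le_mul_sub hC.le hCz hz)
    _ = _ := by ring

noncomputable def sphericalCatenoidHalfPeriod (n : ℕ) (C : ℝ) : ℝ :=
  2 * ∫ z in C..(π / 2), ((sin z / sin C) ^ (2 * (n - 1)) - 1) ^ (-(1 : ℝ) / 2)

section HalfPeriod

variable {n : ℕ} (hn : 2 ≤ n) {C : ℝ} (hC : 0 < C) (hC' : C < π / 2)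
include hn hC hC'

lemma sphericalCatenoidHalfPeriod_le : sphericalCatenoidHalfPeriod n C ≤ 4 * √(π ^ 2 / 2) := by
  have hε : π / 2 - C ≠ 0 := by linarith
  have h := integral_rpow_neg_half_le_of_mul_sub_le hC'.le (by have := pi_pos; positivity)
    (by fun_prop)
    fun z hz ↦ mul_sub_le_sin_div_sin_pow_sub_one (k := 2 * (n - 1)) (by omega) hC hz.1.le hz.2
  rw [div_div_eq_mul_div, mul_comm (π / 2 - C), mul_div_mul_right _ _ hε] at h
  unfold sphericalCatenoidHalfPeriod
  linarith

lemma le_sphericalCatenoidHalfPeriod :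
    2 * √(2 * sin C ^ (2 * (n - 1)) / ((n : ℝ) - 1)) ≤ sphericalCatenoidHalfPeriod n C := by
  set k := 2 * (n - 1)
  have hn' : (0 : ℝ) < n - 1 := by
    have : (2 : ℝ) ≤ n := by exact_mod_cast hn
    linarith
  have hk : (k : ℝ) = 2 * ((n : ℝ) - 1) := by
    simp only [k, Nat.cast_mul, Nat.cast_ofNat, Nat.cast_sub (by omega : 1 ≤ n), Nat.cast_one]
  have hε : 0 < π / 2 - C := by linarith
  have hs : 0 < sin C := sin_pos_of_pos_of_lt_pi hC (by linarith)
  have hlow z (hz : z ∈ Ioc C (π / 2)) :=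
    mul_sub_le_sin_div_sin_pow_sub_one (by omega : k ≠ 0) hC hz.1.le hz.2
  have h := le_integral_rpow_neg_half_of_le_mul_sub hC'.le
    (by rw [hk]; positivity : 0 < k * (π / 2 - C) / sin C ^ k)
    (intervalIntegrable_rpow_neg_half_of_mul_sub_le hC'.le (by have := pi_pos; positivity)
      (by fun_prop) hlow)
    (fun z hz ↦ lt_of_lt_of_le (mul_pos (by have := pi_pos; positivity) (sub_pos.2 hz.1))
      (hlow z (Ioo_subset_Ioc_self hz)))
    fun z hz ↦ sin_div_sin_pow_sub_one_le_mul_sub k hC hz.1.le hz.2.le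
  rw [div_div_eq_mul_div, mul_comm _ (π / 2 - C), mul_div_mul_left _ _ hε.ne'] at h
  have hval : 2 * √(2 * sin C ^ k / ((n : ℝ) - 1)) = 2 * (2 * √(sin C ^ k / k)) := by
    rw [show 2 * sin C ^ k / ((n : ℝ) - 1) = 2 ^ 2 * (sin C ^ k / k) by
      rw [hk]; field_simp, sqrt_mul (by positivity), sqrt_sq (by positivity)]
  unfold sphericalCatenoidHalfPeriod
  linarith

end HalfPeriod

/-- `limsup_{C → (π/2)⁻} Y_C ≥ 2√(2/(n−1))`, where
`Y_C = 2∫_C^{π/2} ((sin z/sin C)^{2(n−1)} − 1)^{−1/2} dz` is the half-period of the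
spherical catenoid. -/
theorem spherical_catenoid_halfperiod_limsup_lower
    (n : ℕ) (hn : 2 ≤ n) :
    2 * Real.sqrt (2 / ((n : ℝ) - 1)) ≤
      Filter.limsup
        (fun C : ℝ => 2 * ∫ z in C..(π / 2),
          ((Real.sin z / Real.sin C) ^ (2 * (n - 1)) - 1) ^ (-(1 : ℝ) / 2))
        (𝓝[<] (π / 2)) := by
  show _ ≤ limsup (sphericalCatenoidHalfPeriod n) (𝓝[<] (π / 2))
  have hlim : Tendsto (fun C ↦ 2 * √(2 * sin C ^ (2 * (n - 1)) / ((n : ℝ) - 1)))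
      (𝓝[<] (π / 2)) (𝓝 (2 * √(2 / ((n : ℝ) - 1)))) := by
    have hcont : Continuous fun C ↦ 2 * √(2 * sin C ^ (2 * (n - 1)) / ((n : ℝ) - 1)) := by
      fun_prop
    simpa using (hcont.tendsto (π / 2)).mono_left nhdsWithin_le_nhds
  have hC : ∀ᶠ C in 𝓝[<] (π / 2), C ∈ Ioo 0 (π / 2) := Ioo_mem_nhdsLT (by positivity)
  calc 2 * √(2 / ((n : ℝ) - 1))
      = limsup (fun C ↦ 2 * √(2 * sin C ^ (2 * (n - 1)) / ((n : ℝ) - 1))) (𝓝[<] (π / 2)) :=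
        hlim.limsup_eq.symm
    _ ≤ limsup (sphericalCatenoidHalfPeriod n) (𝓝[<] (π / 2)) :=
      limsup_le_limsup
        (hC.mono fun C hC ↦ le_sphericalCatenoidHalfPeriod hn hC.1 hC.2)
        hlim.isBoundedUnder_ge.isCoboundedUnder_le
        ⟨_, hC.mono fun C hC ↦ sphericalCatenoidHalfPeriod_le hn hC.1 hC.2⟩
end

section
/- Let n ≥ 2 be an integer and C ∈ (0, π/6). Then 2·∫_C^{π/2} ((sin z / sin C)^{2(n−1)} − 1)^{−1/2} dz ≤ 4·sin C·√(π − 2C) / √(sin 2C). In particular, the quantity Y_C = 2∫_C^{π/2}((sin z/sin C)^{2(n−1)}−1)^{−1/2}dz satisfies Y_C ≤ 4 sin C √(π−2C)/√(sin 2C) for C ∈ (0, π/6). -/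
/-! For `z ∈ (C, π/2]` the ratio `r = sin z / sin C` exceeds `1`, so since `n ≥ 2`,
`r ^ (2(n-1)) - 1 ≥ r ^ 2 - 1 = sin (z - C) sin (z + C) / sin² C`. Jordan's inequality gives
`sin (z - C) ≥ (z - C) / 2`, and for `C ≤ π/6` concavity of `sin` gives
`sin (z + C) ≥ sin 2C`. So the integrand is at most `√2 sin C / √(sin 2C) · (z - C) ^ (-1/2)`,
whose integral over `[C, π/2]` is `2 √2 sin C √(π/2 - C) / √(sin 2C)`. -/

open Real Set MeasureTheory intervalIntegral

-- For `x < 0` both sides are junk zeros: `x ^ y` carries the factor `cos (y π) = cos (-π/2)`.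
lemma rpow_neg_one_half_eq_inv_sqrt (x : ℝ) : x ^ (-(1 : ℝ) / 2) = (√x)⁻¹ := by
  rcases lt_or_ge x 0 with hx | hx
  · have : cos (-(1 : ℝ) / 2 * π) = 0 := by
      rw [show -(1 : ℝ) / 2 * π = -(π / 2) by ring, cos_neg, cos_pi_div_two]
    rw [rpow_def_of_neg hx, this, mul_zero, sqrt_eq_zero'.2 hx.le, inv_zero]
  · rw [neg_div, rpow_neg hx, sqrt_eq_rpow]

lemma rpow_neg_one_half_nonneg (x : ℝ) : 0 ≤ x ^ (-(1 : ℝ) / 2) := by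
  rw [rpow_neg_one_half_eq_inv_sqrt]
  positivity

lemma intervalIntegrable_sub_rpow_neg_one_half (a b : ℝ) :
    IntervalIntegrable (fun x => (x - a) ^ (-(1 : ℝ) / 2)) volume a b := by
  have h := (intervalIntegrable_rpow' (a := 0) (b := b - a)
    (by norm_num : -1 < -(1 : ℝ) / 2)).comp_sub_right a
  rwa [zero_add, sub_add_cancel] at h

lemma integral_sub_rpow_neg_one_half (a b : ℝ) :
    ∫ x in a..b, (x - a) ^ (-(1 : ℝ) / 2) = 2 * √(b - a) := by
  rw [integral_comp_sub_right (· ^ (-(1 : ℝ) / 2)), sub_self,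
    integral_rpow (Or.inl (by norm_num)), zero_rpow (by norm_num), sqrt_eq_rpow,
    show -(1 : ℝ) / 2 + 1 = 1 / 2 by norm_num]
  ring

lemma intervalIntegral.integral_le_integral_of_nonneg_of_le_Ioo {f g : ℝ → ℝ} {a b : ℝ}
    (hab : a ≤ b) (hf : AEStronglyMeasurable f) (hg : IntervalIntegrable g volume a b)
    (hf₀ : ∀ x ∈ Ioo a b, 0 ≤ f x) (hfg : ∀ x ∈ Ioo a b, f x ≤ g x) :
    ∫ x in a..b, f x ≤ ∫ x in a..b, g x := by
  have hnorm : ∀ᵐ x ∂volume.restrict (uIoc a b), ‖f x‖ ≤ g x := by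
    rw [uIoc_of_le hab, Measure.restrict_congr_set Ioo_ae_eq_Ioc.symm]
    filter_upwards [ae_restrict_mem measurableSet_Ioo] with x hx
    rw [norm_of_nonneg (hf₀ x hx)]
    exact hfg x hx
  exact integral_mono_on_of_le_Ioo hab (hg.mono_fun' hf.restrict hnorm) hg hfg

lemma sin_sq_sub_sin_sq (x y : ℝ) : sin x ^ 2 - sin y ^ 2 = sin (x - y) * sin (x + y) := by
  rw [sin_sub, sin_add]
  linear_combination sin y ^ 2 * sin_sq_add_cos_sq x - sin x ^ 2 * sin_sq_add_cos_sq y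

lemma half_le_sin {x : ℝ} (hx₀ : 0 ≤ x) (hx : x ≤ π / 2) : x / 2 ≤ sin x := by
  have : x / 2 ≤ 2 / π * x := by
    rw [div_mul_eq_mul_div, div_le_div_iff₀ two_pos pi_pos]
    nlinarith [pi_le_four]
  exact this.trans (mul_le_sin hx₀ hx)

-- Concavity puts the minimum of `sin` on `[2C, π/2 + C]` at an endpoint, and
-- `sin (π/2 + C) = cos C ≥ 2 sin C cos C = sin 2C` because `sin C ≤ 1/2`.
lemma sin_two_mul_le_sin_add {C z : ℝ} (hC₀ : 0 ≤ C) (hC : C ≤ π / 6)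
    (hz : z ∈ Icc C (π / 2)) :
    sin (2 * C) ≤ sin (z + C) := by
  have hsinC : sin C ≤ 1 / 2 := by
    rw [← sin_pi_div_six]
    exact sin_le_sin_of_le_of_le_pi_div_two (by linarith [pi_pos]) (by linarith [pi_pos]) hC
  have hcosC : 0 ≤ cos C := cos_nonneg_of_mem_Icc ⟨by linarith [pi_pos], by linarith [pi_pos]⟩
  have hend : sin (2 * C) ≤ sin (C + π / 2) := by
    rw [sin_add_pi_div_two, sin_two_mul]
    nlinarith
  have := strictConcaveOn_sin_Icc.concaveOn.min_le_of_mem_Icc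
    (x := 2 * C) (y := C + π / 2) (z := z + C) ⟨by linarith, by linarith [pi_pos]⟩
    ⟨by linarith, by linarith [pi_pos]⟩ ⟨by linarith [hz.1], by linarith [hz.2]⟩
  exact (le_min le_rfl hend).trans this

lemma sin_two_mul_mul_sub_le_sin_sq_sub_sin_sq {C z : ℝ} (hC₀ : 0 ≤ C) (hC : C ≤ π / 6)
    (hz : z ∈ Icc C (π / 2)) : sin (2 * C) * (z - C) / 2 ≤ sin z ^ 2 - sin C ^ 2 := by
  have hsub : (z - C) / 2 ≤ sin (z - C) := half_le_sin (by linarith [hz.1]) (by linarith [hz.2])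
  have hsin2C : 0 ≤ sin (2 * C) :=
    sin_nonneg_of_nonneg_of_le_pi (by linarith) (by linarith [pi_pos])
  calc sin (2 * C) * (z - C) / 2 = (z - C) / 2 * sin (2 * C) := by ring
    _ ≤ sin (z - C) * sin (z + C) :=
      mul_le_mul hsub (sin_two_mul_le_sin_add hC₀ hC hz) hsin2C
        ((div_nonneg (sub_nonneg.2 hz.1) zero_le_two).trans hsub)
    _ = sin z ^ 2 - sin C ^ 2 := (sin_sq_sub_sin_sq z C).symm

lemma sin_two_mul_div_mul_sub_le_sin_div_pow_sub_one {C z : ℝ} {m : ℕ} (hm : 1 ≤ m)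
    (hC₀ : 0 < C) (hC : C ≤ π / 6) (hz : z ∈ Icc C (π / 2)) :
    sin (2 * C) / (2 * sin C ^ 2) * (z - C) ≤ (sin z / sin C) ^ (2 * m) - 1 := by
  have hsinC : 0 < sin C := sin_pos_of_pos_of_lt_pi hC₀ (by linarith [pi_pos])
  have hle : sin C ≤ sin z :=
    sin_le_sin_of_le_of_le_pi_div_two (by linarith [pi_pos]) hz.2 hz.1
  calc sin (2 * C) / (2 * sin C ^ 2) * (z - C) = sin (2 * C) * (z - C) / 2 / sin C ^ 2 := by
        field_simp
    _ ≤ (sin z ^ 2 - sin C ^ 2) / sin C ^ 2 := by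
        gcongr
        exact sin_two_mul_mul_sub_le_sin_sq_sub_sin_sq hC₀.le hC hz
    _ = (sin z / sin C) ^ 2 - 1 := by field_simp
    _ ≤ (sin z / sin C) ^ (2 * m) - 1 := by
        gcongr
        · exact (one_le_div hsinC).2 hle
        · omega

/-- For `C ∈ (0, π/6)`, the half-period of the spherical catenoid satisfies
`Y_C = 2∫_C^{π/2} ((sin z/sin C)^{2(n−1)} − 1)^{−1/2} dz ≤ 4 sin C √(π−2C)/√(sin 2C)`. -/
theorem spherical_catenoid_halfperiod_upper_bound
    (n : ℕ) (hn : 2 ≤ n) (C : ℝ) (hC : C ∈ Set.Ioo 0 (π / 6)) :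
    2 * ∫ z in C..(π / 2),
        ((Real.sin z / Real.sin C) ^ (2 * (n - 1)) - 1) ^ (-(1 : ℝ) / 2)
      ≤ 4 * Real.sin C * Real.sqrt (π - 2 * C) / Real.sqrt (Real.sin (2 * C)) := by
  obtain ⟨hC₀, hC⟩ := hC
  have hsinC : 0 < sin C := sin_pos_of_pos_of_lt_pi hC₀ (by linarith [pi_pos])
  have hsin2C : 0 < sin (2 * C) := sin_pos_of_pos_of_lt_pi (by linarith) (by linarith [pi_pos])
  set c := sin (2 * C) / (2 * sin C ^ 2)
  have hc : 0 < c := by positivity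
  have hbound : ∀ z ∈ Ioo C (π / 2), ((sin z / sin C) ^ (2 * (n - 1)) - 1) ^ (-(1 : ℝ) / 2)
      ≤ c ^ (-(1 : ℝ) / 2) * (z - C) ^ (-(1 : ℝ) / 2) := fun z hz => by
    rw [← mul_rpow hc.le (sub_pos.2 hz.1).le]
    exact rpow_le_rpow_of_nonpos (mul_pos hc (sub_pos.2 hz.1))
      (sin_two_mul_div_mul_sub_le_sin_div_pow_sub_one (by omega) hC₀ hC.le
        (Ioo_subset_Icc_self hz)) (by norm_num)
  have hc_rpow : c ^ (-(1 : ℝ) / 2) = √2 * sin C / √(sin (2 * C)) := by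
    rw [rpow_neg_one_half_eq_inv_sqrt, sqrt_div' _ (by positivity), sqrt_mul' _ (by positivity),
      sqrt_sq hsinC.le]
    field_simp
  have hsqrt : √(π - 2 * C) = √2 * √(π / 2 - C) := by
    rw [← sqrt_mul zero_le_two]
    ring_nf
  calc 2 * ∫ z in C..(π / 2), ((sin z / sin C) ^ (2 * (n - 1)) - 1) ^ (-(1 : ℝ) / 2)
      ≤ 2 * ∫ z in C..(π / 2), c ^ (-(1 : ℝ) / 2) * (z - C) ^ (-(1 : ℝ) / 2) := by
        refine mul_le_mul_of_nonneg_left ?_ zero_le_two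
        exact integral_le_integral_of_nonneg_of_le_Ioo (by linarith [pi_pos])
          (Measurable.aestronglyMeasurable (by fun_prop))
          ((intervalIntegrable_sub_rpow_neg_one_half C _).const_mul _)
          (fun z _ => rpow_neg_one_half_nonneg _) hbound
    _ = 2 * (c ^ (-(1 : ℝ) / 2) * (2 * √(π / 2 - C))) := by
        rw [intervalIntegral.integral_const_mul, integral_sub_rpow_neg_one_half]
    _ = 4 * sin C * √(π - 2 * C) / √(sin (2 * C)) := by
        rw [hc_rpow, hsqrt]
        ring
end
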